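/- Let d ≥ 1 be an integer, σ ∈ (0,1) and 1 < p < d/σ. Let (u_n) be measurable functions on ℝ^d with sup_n ‖u_n‖_{Ẇ^{σ,p}} < ∞, and suppose u_n → u pointwise almost everywhere in ℝ^d. Then ‖u‖_{Ẇ^{σ,p}} < ∞ and the Brezis–Lieb splitting holds for the Gagliardo seminorm: ‖u_n‖_{Ẇ^{σ,p}}^p - ‖u‖_{Ẇ^{σ,p}}^p - ‖u_n - u‖_{Ẇ^{σ,p}}^p → 0 as n → ∞. -/

import Mathlib

/-! The Gagliardo seminorm of `v` is the `L^p(ℝ^d × ℝ^d)` norm of the difference quotient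
`(v x - v y) / |x - y|^{d/p + σ}`, and a.e. convergence of `u_n` gives a.e. convergence of these
quotients on the product, so the theorem is the Brezis–Lieb lemma in `L^p` of a measure space,
valid for every `0 < p`. Fatou bounds `‖g‖_p` by `sup ‖f_n‖_p`. The elementary inequality
`||x|^p - |y|^p - |x - y|^p| ≤ ε |x - y|^p + C_ε |y|^p` dominates the excess of
`||f_n|^p - |g|^p - |f_n - g|^p|` over `ε |f_n - g|^p` by `C_ε |g|^p`, so dominated convergence
leaves at most `ε sup ‖f_n - g‖_p^p` in the limit, for every `ε > 0`. -/

open MeasureTheory Filter Metric ENNReal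

noncomputable section

abbrev Rd (d : ℕ) := EuclideanSpace ℝ (Fin d)

/-- The critical exponent `p* = dp/(d - σp)`. -/
def pStarFrac (d : ℕ) (σ p : ℝ) : ℝ := d * p / (d - σ * p)

/-- The `p`-th power of the Gagliardo seminorm
`‖u‖_{Ẇ^{σ,p}}^p = ∫∫ |u(x)-u(y)|^p / |x-y|^{d+pσ} dx dy`, valued in `ℝ≥0∞`. -/
def gagliardo (d : ℕ) (σ p : ℝ) (u : Rd d → ℝ) : ℝ≥0∞ :=
  ∫⁻ x, ∫⁻ y, ENNReal.ofReal (|u x - u y| ^ p / ‖x - y‖ ^ ((d : ℝ) + p * σ))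

/-- `u ∈ Ẇ^{σ,p}(ℝ^d)`: `u ∈ L^{p*}` and the Gagliardo seminorm is finite. -/
def MemWFrac (d : ℕ) (σ p : ℝ) (u : Rd d → ℝ) : Prop :=
  MemLp u (ENNReal.ofReal (pStarFrac d σ p)) volume ∧ gagliardo d σ p u < ⊤

/-- The sharp fractional Sobolev constant `S_{d,σ,p}`. -/
def SFrac (d : ℕ) (σ p : ℝ) : ℝ :=
  sInf { r : ℝ | ∃ u, MemWFrac d σ p u ∧ ¬ (u =ᵐ[volume] (fun _ => (0:ℝ))) ∧
    r = (gagliardo d σ p u).toReal /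
      (∫ x, |u x| ^ pStarFrac d σ p) ^ (p / pStarFrac d σ p) }

open Topology

section Elementary

variable {p ε : ℝ}

theorem exists_abs_add_rpow_le (hp : 0 ≤ p) (hε : 0 < ε) :
    ∃ C : ℝ, 0 ≤ C ∧ ∀ a b : ℝ, |a + b| ^ p ≤ (1 + ε) * |a| ^ p + C * |b| ^ p := by
  obtain ⟨δ, hδε, hδ⟩ : ∃ δ : ℝ, (1 + δ) ^ p < 1 + ε ∧ 0 < δ := by
    have hcont : Tendsto (fun t : ℝ => (1 + t) ^ p) (𝓝 0) (𝓝 1) := by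
      simpa using (((continuous_const_add 1).rpow_const fun _ => Or.inr hp).tendsto 0)
    exact ((hcont.eventually (gt_mem_nhds (by linarith))).filter_mono nhdsWithin_le_nhds
      |>.and self_mem_nhdsWithin).exists (f := 𝓝[>] 0)
  refine ⟨(1 + δ⁻¹) ^ p, by positivity, fun a b => ?_⟩
  have hab := abs_add_le a b
  rcases le_total |b| (δ * |a|) with hb_small | ha_small
  · calc |a + b| ^ p ≤ ((1 + δ) * |a|) ^ p := by gcongr; linarith
      _ = (1 + δ) ^ p * |a| ^ p := Real.mul_rpow (by positivity) (abs_nonneg a)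
      _ ≤ (1 + ε) * |a| ^ p := by gcongr
      _ ≤ _ := le_add_of_nonneg_right (by positivity)
  · have ha : |a| ≤ δ⁻¹ * |b| := by rwa [← div_eq_inv_mul, le_div_iff₀' hδ]
    calc |a + b| ^ p ≤ ((1 + δ⁻¹) * |b|) ^ p := by gcongr; linarith
      _ = (1 + δ⁻¹) ^ p * |b| ^ p := Real.mul_rpow (by positivity) (abs_nonneg b)
      _ ≤ _ := le_add_of_nonneg_left (by positivity)

theorem exists_abs_rpow_sub_rpow_sub_rpow_le (hp : 0 ≤ p) (hε : 0 < ε) :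
    ∃ C : ℝ, 0 ≤ C ∧ ∀ x y : ℝ,
      |(|x| ^ p - |y| ^ p - |x - y| ^ p)| ≤ ε * |x - y| ^ p + C * |y| ^ p := by
  set ε' := min 1 (ε / 2)
  have hε' : 0 < ε' := lt_min one_pos (half_pos hε)
  have hε'1 : ε' ≤ 1 := min_le_left _ _
  have hε'ε : ε' ≤ ε / 2 := min_le_right _ _
  obtain ⟨C, hC, hadd⟩ := exists_abs_add_rpow_le hp hε'
  refine ⟨2 * C + 1, by positivity, fun x y => ?_⟩
  have hx : |x| ^ p ≤ (1 + ε') * |x - y| ^ p + C * |y| ^ p := by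
    simpa using hadd (x - y) y
  have hxy : |x - y| ^ p ≤ (1 + ε') * |x| ^ p + C * |y| ^ p := by
    simpa [abs_neg, ← sub_eq_add_neg] using hadd x (-y)
  have h0 : 0 ≤ |x - y| ^ p := by positivity
  have h1 : 0 ≤ |y| ^ p := by positivity
  rw [abs_le]
  constructor <;> nlinarith [mul_le_mul_of_nonneg_left hx hε'.le,
    mul_nonneg (mul_nonneg (sub_nonneg.2 hε'1) hε'.le) h0,
    mul_nonneg (mul_nonneg (sub_nonneg.2 hε'1) hC) h1]

end Elementary

section BrezisLieb

variable {α : Type*} [MeasurableSpace α] {μ : Measure α} {p : ℝ} {f : ℕ → α → ℝ}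
  {g : α → ℝ} {M : ℝ≥0∞}

theorem lintegral_rpow_le_of_ae_tendsto (hp : 0 ≤ p) (hf : ∀ n, AEMeasurable (f n) μ)
    (hbdd : ∀ n, ∫⁻ a, ENNReal.ofReal (|f n a| ^ p) ∂μ ≤ M)
    (hae : ∀ᵐ a ∂μ, Tendsto (fun n => f n a) atTop (𝓝 (g a))) :
    ∫⁻ a, ENNReal.ofReal (|g a| ^ p) ∂μ ≤ M := by
  have hcont : Continuous fun t : ℝ => ENNReal.ofReal (|t| ^ p) :=
    ENNReal.continuous_ofReal.comp (continuous_abs.rpow_const fun _ => Or.inr hp)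
  calc ∫⁻ a, ENNReal.ofReal (|g a| ^ p) ∂μ
      = ∫⁻ a, liminf (fun n => ENNReal.ofReal (|f n a| ^ p)) atTop ∂μ :=
        lintegral_congr_ae (hae.mono fun a ha => ((hcont.tendsto _).comp ha).liminf_eq.symm)
    _ ≤ liminf (fun n => ∫⁻ a, ENNReal.ofReal (|f n a| ^ p) ∂μ) atTop :=
        lintegral_liminf_le' fun n => by fun_prop
    _ ≤ M := liminf_le_of_frequently_le' (.of_forall hbdd)

theorem exists_lintegral_rpow_sub_le (hp : 0 ≤ p) :
    ∃ C : ℝ≥0∞, C ≠ ∞ ∧ ∀ φ ψ : α → ℝ, AEMeasurable φ μ →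
      ∫⁻ a, ENNReal.ofReal (|φ a - ψ a| ^ p) ∂μ ≤
        C * (∫⁻ a, ENNReal.ofReal (|φ a| ^ p) ∂μ +
          ∫⁻ a, ENNReal.ofReal (|ψ a| ^ p) ∂μ) := by
  obtain ⟨C, hC, hadd⟩ := exists_abs_add_rpow_le hp one_pos
  refine ⟨ENNReal.ofReal (2 + C), ofReal_ne_top, fun φ ψ hφ => ?_⟩
  rw [← lintegral_add_left' (by fun_prop), ← lintegral_const_mul' _ _ ofReal_ne_top]
  refine lintegral_mono fun a => ?_
  rw [← ofReal_add (by positivity) (by positivity), ← ofReal_mul (by positivity)]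
  refine ofReal_le_ofReal ?_
  have h := hadd (φ a) (-ψ a)
  rw [← sub_eq_add_neg, abs_neg] at h
  nlinarith [Real.rpow_nonneg (abs_nonneg (φ a)) p, Real.rpow_nonneg (abs_nonneg (ψ a)) p]

theorem limsup_lintegral_abs_rpow_sub_rpow_sub_rpow_le (hp : 0 < p) {ε : ℝ} (hε : 0 < ε)
    (hf : ∀ n, AEMeasurable (f n) μ) (hg : AEMeasurable g μ)
    (hg_fin : ∫⁻ a, ENNReal.ofReal (|g a| ^ p) ∂μ ≠ ∞) {K : ℝ≥0∞}
    (hK : ∀ n, ∫⁻ a, ENNReal.ofReal (|f n a - g a| ^ p) ∂μ ≤ K)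
    (hae : ∀ᵐ a ∂μ, Tendsto (fun n => f n a) atTop (𝓝 (g a))) :
    limsup (fun n => ∫⁻ a, ENNReal.ofReal |(|f n a| ^ p - |g a| ^ p - |f n a - g a| ^ p)| ∂μ)
      atTop ≤ ENNReal.ofReal ε * K := by
  obtain ⟨C, hC, hΔ⟩ := exists_abs_rpow_sub_rpow_sub_rpow_le hp.le hε
  set Δ : ℕ → α → ℝ := fun n a => |f n a| ^ p - |g a| ^ p - |f n a - g a| ^ p
  set W : ℕ → α → ℝ≥0∞ := fun n a => ENNReal.ofReal (|Δ n a| - ε * |f n a - g a| ^ p)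
  have hW_lim : ∀ᵐ a ∂μ, Tendsto (fun n => W n a) atTop (𝓝 0) := by
    have hcont : Continuous fun t : ℝ => |t| ^ p :=
      continuous_abs.rpow_const fun _ => Or.inr hp.le
    filter_upwards [hae] with a ha
    have h₁ : Tendsto (fun n => |f n a| ^ p) atTop (𝓝 (|g a| ^ p)) := (hcont.tendsto _).comp ha
    have h₂ : Tendsto (fun n => |f n a - g a| ^ p) atTop (𝓝 0) := by
      simpa [Function.comp_def, Real.zero_rpow hp.ne'] using
        (hcont.tendsto 0).comp (tendsto_sub_nhds_zero_iff.2 ha)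
    simpa [W, Δ] using
      ENNReal.tendsto_ofReal (((h₁.sub_const (|g a| ^ p)).sub h₂).abs.sub (h₂.const_mul ε))
  have hW_bound : ∀ n, W n ≤ᵐ[μ] fun a => ENNReal.ofReal C * ENNReal.ofReal (|g a| ^ p) :=
    fun n => ae_of_all _ fun a => by
      simp only [W, Δ, ← ofReal_mul hC]
      exact ofReal_le_ofReal (by linarith [hΔ (f n a) (g a)])
  have hW_fin : ∫⁻ a, ENNReal.ofReal C * ENNReal.ofReal (|g a| ^ p) ∂μ ≠ ∞ := by
    rw [lintegral_const_mul' _ _ ofReal_ne_top]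
    exact mul_ne_top ofReal_ne_top hg_fin
  have hW : Tendsto (fun n => ∫⁻ a, W n a ∂μ) atTop (𝓝 0) := by
    simpa using tendsto_lintegral_of_dominated_convergence' _ (fun n => by fun_prop) hW_bound
      hW_fin hW_lim
  have hle : ∀ n, ∫⁻ a, ENNReal.ofReal |Δ n a| ∂μ ≤
      ∫⁻ a, W n a ∂μ + ENNReal.ofReal ε * K := by
    intro n
    calc ∫⁻ a, ENNReal.ofReal |Δ n a| ∂μ
        ≤ ∫⁻ a, (W n a + ENNReal.ofReal ε * ENNReal.ofReal (|f n a - g a| ^ p)) ∂μ := by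
          refine lintegral_mono fun a => ?_
          rw [← ofReal_mul hε.le]
          simpa [W] using
            ofReal_add_le (p := |Δ n a| - ε * |f n a - g a| ^ p) (q := ε * |f n a - g a| ^ p)
      _ = ∫⁻ a, W n a ∂μ +
            ENNReal.ofReal ε * ∫⁻ a, ENNReal.ofReal (|f n a - g a| ^ p) ∂μ := by
          rw [lintegral_add_left' (by fun_prop), lintegral_const_mul' _ _ ofReal_ne_top]
      _ ≤ ∫⁻ a, W n a ∂μ + ENNReal.ofReal ε * K := by gcongr; exact hK n
  calc limsup (fun n => ∫⁻ a, ENNReal.ofReal |Δ n a| ∂μ) atTop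
      ≤ limsup (fun n => ∫⁻ a, W n a ∂μ + ENNReal.ofReal ε * K) atTop :=
        limsup_le_limsup (.of_forall hle)
    _ = ENNReal.ofReal ε * K := by simpa using (hW.add_const _).limsup_eq

theorem tendsto_lintegral_abs_rpow_sub_rpow_sub_rpow (hp : 0 < p)
    (hf : ∀ n, AEMeasurable (f n) μ) (hM : M ≠ ∞)
    (hbdd : ∀ n, ∫⁻ a, ENNReal.ofReal (|f n a| ^ p) ∂μ ≤ M)
    (hae : ∀ᵐ a ∂μ, Tendsto (fun n => f n a) atTop (𝓝 (g a))) :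
    Tendsto
      (fun n => ∫⁻ a, ENNReal.ofReal |(|f n a| ^ p - |g a| ^ p - |f n a - g a| ^ p)| ∂μ)
      atTop (𝓝 0) := by
  have hg : AEMeasurable g μ := aemeasurable_of_tendsto_metrizable_ae atTop hf hae
  have hgM := lintegral_rpow_le_of_ae_tendsto hp.le hf hbdd hae
  obtain ⟨C, hC, hsub⟩ := exists_lintegral_rpow_sub_le (μ := μ) hp.le
  have hK : ∀ n, ∫⁻ a, ENNReal.ofReal (|f n a - g a| ^ p) ∂μ ≤ C * (M + M) :=
    fun n => (hsub _ _ (hf n)).trans (by gcongr; exact hbdd n)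
  have hlimsup := fun ε (hε : 0 < ε) =>
    limsup_lintegral_abs_rpow_sub_rpow_sub_rpow_le hp hε hf hg (hgM.trans_lt hM.lt_top).ne hK hae
  have hsmall : Tendsto (fun ε => ENNReal.ofReal ε * (C * (M + M))) (𝓝[>] 0)
      (𝓝 (ENNReal.ofReal 0 * (C * (M + M)))) :=
    ENNReal.Tendsto.mul_const
      (ENNReal.tendsto_ofReal (tendsto_nhdsWithin_of_tendsto_nhds tendsto_id))
      (Or.inr (mul_ne_top hC (add_ne_top.2 ⟨hM, hM⟩)))
  rw [ofReal_zero, zero_mul] at hsmall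
  exact tendsto_of_le_liminf_of_limsup_le zero_le
    (ge_of_tendsto hsmall (eventually_nhdsWithin_of_forall hlimsup))

theorem tendsto_toReal_lintegral_rpow_sub_rpow_sub_rpow (hp : 0 < p)
    (hf : ∀ n, AEMeasurable (f n) μ) (hM : M ≠ ∞)
    (hbdd : ∀ n, ∫⁻ a, ENNReal.ofReal (|f n a| ^ p) ∂μ ≤ M)
    (hae : ∀ᵐ a ∂μ, Tendsto (fun n => f n a) atTop (𝓝 (g a))) :
    Tendsto (fun n => (∫⁻ a, ENNReal.ofReal (|f n a| ^ p) ∂μ).toReal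
        - (∫⁻ a, ENNReal.ofReal (|g a| ^ p) ∂μ).toReal
        - (∫⁻ a, ENNReal.ofReal (|f n a - g a| ^ p) ∂μ).toReal) atTop (𝓝 0) := by
  have hg : AEMeasurable g μ := aemeasurable_of_tendsto_metrizable_ae atTop hf hae
  have hgM := lintegral_rpow_le_of_ae_tendsto hp.le hf hbdd hae
  obtain ⟨C, hC, hsub⟩ := exists_lintegral_rpow_sub_le (μ := μ) hp.le
  have hintegral : ∀ φ : α → ℝ, AEMeasurable φ μ →
      ∫⁻ a, ENNReal.ofReal (|φ a| ^ p) ∂μ < ∞ →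
      Integrable (fun a => |φ a| ^ p) μ ∧
        (∫⁻ a, ENNReal.ofReal (|φ a| ^ p) ∂μ).toReal = ∫ a, |φ a| ^ p ∂μ := by
    intro φ hφ hfin
    have hm : AEStronglyMeasurable (fun a => |φ a| ^ p) μ :=
      (by fun_prop : AEMeasurable (fun a => |φ a| ^ p) μ).aestronglyMeasurable
    have hnn : 0 ≤ᵐ[μ] fun a => |φ a| ^ p := ae_of_all _ fun a => by positivity
    exact ⟨(lintegral_ofReal_ne_top_iff_integrable hm hnn).1 hfin.ne,
      (integral_eq_lintegral_of_nonneg_ae hnn hm).symm⟩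
  refine squeeze_zero_norm (fun n => ?_) ((ENNReal.tendsto_toReal zero_ne_top).comp
    (tendsto_lintegral_abs_rpow_sub_rpow_sub_rpow hp hf hM hbdd hae))
  have hfn := (hbdd n).trans_lt hM.lt_top
  have hg' := hgM.trans_lt hM.lt_top
  obtain ⟨hfi, hfe⟩ := hintegral (f n) (hf n) hfn
  obtain ⟨hgi, hge⟩ := hintegral g hg hg'
  obtain ⟨hdi, hde⟩ := hintegral (fun a => f n a - g a) ((hf n).sub hg)
    ((hsub _ _ (hf n)).trans_lt (mul_lt_top hC.lt_top (add_lt_top.2 ⟨hfn, hg'⟩)))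
  rw [hfe, hge, hde, ← integral_sub hfi hgi, ← integral_sub
    (f := fun a => |f n a| ^ p - |g a| ^ p) (hfi.sub hgi) hdi, Function.comp_apply,
    ← integral_eq_lintegral_of_nonneg_ae (ae_of_all _ fun a => abs_nonneg _) (by fun_prop)]
  exact norm_integral_le_integral_norm _

end BrezisLieb

section Gagliardo

variable {d : ℕ} {σ p : ℝ}

def gagliardoQuotient (d : ℕ) (σ p : ℝ) (v : Rd d → ℝ) (z : Rd d × Rd d) : ℝ :=
  (v z.1 - v z.2) / ‖z.1 - z.2‖ ^ ((d : ℝ) / p + σ)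

theorem abs_gagliardoQuotient_rpow (hp : p ≠ 0) (v : Rd d → ℝ) (z : Rd d × Rd d) :
    |gagliardoQuotient d σ p v z| ^ p =
      |v z.1 - v z.2| ^ p / ‖z.1 - z.2‖ ^ ((d : ℝ) + p * σ) := by
  have hexp : ((d : ℝ) / p + σ) * p = d + p * σ := by field_simp
  rw [gagliardoQuotient, abs_div, abs_of_nonneg (Real.rpow_nonneg (norm_nonneg (z.1 - z.2)) _),
    Real.div_rpow (abs_nonneg _) (by positivity), ← Real.rpow_mul (norm_nonneg _), hexp]

theorem gagliardoQuotient_sub (v w : Rd d → ℝ) (z : Rd d × Rd d) :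
    gagliardoQuotient d σ p (fun x => v x - w x) z =
      gagliardoQuotient d σ p v z - gagliardoQuotient d σ p w z := by
  simp only [gagliardoQuotient]
  ring

theorem aemeasurable_gagliardoQuotient {v : Rd d → ℝ} (hv : AEMeasurable v) :
    AEMeasurable (gagliardoQuotient d σ p v) := by
  unfold gagliardoQuotient
  fun_prop

theorem gagliardo_eq_lintegral_gagliardoQuotient (hp : p ≠ 0) {v : Rd d → ℝ}
    (hv : AEMeasurable v) :
    gagliardo d σ p v = ∫⁻ z, ENNReal.ofReal (|gagliardoQuotient d σ p v z| ^ p) := by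
  simp_rw [abs_gagliardoQuotient_rpow hp]
  rw [Measure.volume_eq_prod, lintegral_prod _ (by fun_prop)]
  rfl

theorem ae_tendsto_gagliardoQuotient {u : ℕ → Rd d → ℝ} {u₀ : Rd d → ℝ}
    (hae : ∀ᵐ x, Tendsto (fun n => u n x) atTop (𝓝 (u₀ x))) :
    ∀ᵐ z, Tendsto (fun n => gagliardoQuotient d σ p (u n) z) atTop
      (𝓝 (gagliardoQuotient d σ p u₀ z)) := by
  rw [Measure.volume_eq_prod]
  filter_upwards [Measure.quasiMeasurePreserving_fst.ae hae,
    Measure.quasiMeasurePreserving_snd.ae hae] with z h₁ h₂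
  exact (h₁.sub h₂).div_const _

end Gagliardo

theorem brezis_lieb_gagliardo_general (d : ℕ) (σ p : ℝ)
    (hp1 : 1 < p)
    (u : ℕ → Rd d → ℝ) (u₀ : Rd d → ℝ)
    (hmeas : ∀ n, Measurable (u n))
    (hbdd : ∃ M : ℝ, ∀ n, gagliardo d σ p (u n) ≤ ENNReal.ofReal M)
    (hae : ∀ᵐ x ∂(volume : Measure (Rd d)), Tendsto (fun n => u n x) atTop (nhds (u₀ x))) :
    gagliardo d σ p u₀ < ⊤ ∧
    Tendsto (fun n =>
        (gagliardo d σ p (u n)).toReal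
        - (gagliardo d σ p u₀).toReal
        - (gagliardo d σ p (fun x => u n x - u₀ x)).toReal)
      atTop (nhds 0) := by
  obtain ⟨M, hM⟩ := hbdd
  have hp : 0 < p := one_pos.trans hp1
  have hu : ∀ n, AEMeasurable (u n) := fun n => (hmeas n).aemeasurable
  have hu₀ : AEMeasurable u₀ := aemeasurable_of_tendsto_metrizable_ae atTop hu hae
  have hQ := fun n => aemeasurable_gagliardoQuotient (σ := σ) (p := p) (hu n)
  have hQM : ∀ n, ∫⁻ z, ENNReal.ofReal (|gagliardoQuotient d σ p (u n) z| ^ p) ≤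
      ENNReal.ofReal M := fun n => by
    rw [← gagliardo_eq_lintegral_gagliardoQuotient hp.ne' (hu n)]
    exact hM n
  have hQae := ae_tendsto_gagliardoQuotient (σ := σ) (p := p) hae
  have hdiff : ∀ n, gagliardo d σ p (fun x => u n x - u₀ x) =
      ∫⁻ z, ENNReal.ofReal
        (|gagliardoQuotient d σ p (u n) z - gagliardoQuotient d σ p u₀ z| ^ p) := by
    intro n
    simp_rw [← gagliardoQuotient_sub]
    exact gagliardo_eq_lintegral_gagliardoQuotient hp.ne' ((hu n).sub hu₀)
  simp only [gagliardo_eq_lintegral_gagliardoQuotient hp.ne' hu₀,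
    gagliardo_eq_lintegral_gagliardoQuotient hp.ne' (hu _), hdiff]
  exact ⟨(lintegral_rpow_le_of_ae_tendsto hp.le hQ hQM hQae).trans_lt ofReal_lt_top,
    tendsto_toReal_lintegral_rpow_sub_rpow_sub_rpow hp hQ ofReal_ne_top hQM hQae⟩

/-- Brezis–Lieb lemma for the Gagliardo seminorm: if `(u_n)` is bounded in `Ẇ^{σ,p}`
and `u_n → u` a.e., then `‖u‖_{Ẇ^{σ,p}} < ∞` and
`‖u_n‖_{Ẇ^{σ,p}}^p - ‖u‖_{Ẇ^{σ,p}}^p - ‖u_n - u‖_{Ẇ^{σ,p}}^p → 0`. -/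
theorem brezis_lieb_gagliardo (d : ℕ) (σ p : ℝ)
    (hd : 1 ≤ d) (hσ : σ ∈ Set.Ioo (0:ℝ) 1) (hp1 : 1 < p) (hps : p < (d : ℝ) / σ)
    (u : ℕ → Rd d → ℝ) (u₀ : Rd d → ℝ)
    (hmeas : ∀ n, Measurable (u n))
    (hbdd : ∃ M : ℝ, ∀ n, gagliardo d σ p (u n) ≤ ENNReal.ofReal M)
    (hae : ∀ᵐ x ∂(volume : Measure (Rd d)), Tendsto (fun n => u n x) atTop (nhds (u₀ x))) :
    gagliardo d σ p u₀ < ⊤ ∧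
    Tendsto (fun n =>
        (gagliardo d σ p (u n)).toReal
        - (gagliardo d σ p u₀).toReal
        - (gagliardo d σ p (fun x => u n x - u₀ x)).toReal)
      atTop (nhds 0) :=
  brezis_lieb_gagliardo_general d σ p hp1 u u₀ hmeas hbdd hae
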